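/- Let P be a group and K a subgroup of P. For a subgroup X of P define inductively γ_K^0(X) = X and γ_K^{i+1}(X) = ⁅γ_K^i(X), K⁆. Let E be a subgroup of P, let k, c be integers with 1 ≤ k < c, and let A be a subgroup of P such that γ_K^k(E) ≤ A, A ≤ γ_K^c(E), and γ_K^c(A) is the trivial subgroup. Then A is the trivial subgroup. -/

import Mathlib

/-!
From `γ_K^k(E) ≤ A` we get `A ≤ γ_K^c(E) = γ_K^{c-k}(γ_K^k(E)) ≤ γ_K^{c-k}(A)`. Iterating this
self-containment gives `A ≤ γ_K^{n(c-k)}(A)` for every `n`, and for `n = c` the right-hand side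
vanishes because `γ_K^c(A) = ⊥` and `c ≤ c(c-k)`.
-/

/-- `itComm X Y i` is the `i`-fold iterated commutator subgroup
`γ_Y^i(X) = ⁅…⁅⁅X,Y⁆,Y⁆,…,Y⁆` (with `i` copies of `Y`); `itComm X Y 0 = X`. -/
def itComm {P : Type*} [Group P] (X Y : Subgroup P) : ℕ → Subgroup P
  | 0 => X
  | i + 1 => ⁅itComm X Y i, Y⁆

section IteratedCommutator

variable {P : Type*} [Group P]

lemma itComm_mono {X X' : Subgroup P} (Y : Subgroup P) (h : X ≤ X') :
    ∀ i, itComm X Y i ≤ itComm X' Y i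
  | 0 => h
  | i + 1 => Subgroup.commutator_mono (itComm_mono Y h i) le_rfl

lemma itComm_add (X Y : Subgroup P) (a : ℕ) :
    ∀ b, itComm X Y (a + b) = itComm (itComm X Y a) Y b
  | 0 => rfl
  | b + 1 => congrArg (⁅·, Y⁆) (itComm_add X Y a b)

lemma itComm_bot (Y : Subgroup P) : ∀ i, itComm (⊥ : Subgroup P) Y i = ⊥
  | 0 => rfl
  | i + 1 => by
    rw [itComm, itComm_bot Y i, Subgroup.commutator_bot_left]

lemma itComm_eq_bot_of_le {X Y : Subgroup P} {c d : ℕ} (h : itComm X Y c = ⊥) (hcd : c ≤ d) :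
    itComm X Y d = ⊥ := by
  rw [← Nat.add_sub_cancel' hcd, itComm_add, h, itComm_bot]

lemma le_itComm_mul {X Y : Subgroup P} {m : ℕ} (h : X ≤ itComm X Y m) :
    ∀ n, X ≤ itComm X Y (n * m)
  | 0 => by rw [Nat.zero_mul]; rfl
  | n + 1 =>
    calc X ≤ itComm X Y m := h
      _ ≤ itComm (itComm X Y (n * m)) Y m := itComm_mono Y (le_itComm_mul h n) m
      _ = itComm X Y ((n + 1) * m) := by rw [← itComm_add, Nat.succ_mul]

lemma eq_bot_of_le_itComm {X Y : Subgroup P} {m c : ℕ} (hm : 0 < m)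
    (h : X ≤ itComm X Y m) (hc : itComm X Y c = ⊥) : X = ⊥ :=
  le_bot_iff.mp <| itComm_eq_bot_of_le hc (Nat.le_mul_of_pos_right c hm) ▸ le_itComm_mul h c

end IteratedCommutator

theorem nilpotent_sandwich_trivial_general {P : Type*} [Group P] (K E A : Subgroup P) (k c : ℕ)
    (hkc : k < c)
    (h1 : itComm E K k ≤ A) (h2 : A ≤ itComm E K c) (h3 : itComm A K c = ⊥) :
    A = ⊥ := by
  have hA : A ≤ itComm A K (c - k) :=
    calc A ≤ itComm E K c := h2
      _ = itComm (itComm E K k) K (c - k) := by rw [← itComm_add, Nat.add_sub_cancel' hkc.le]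
      _ ≤ itComm A K (c - k) := itComm_mono K h1 (c - k)
  exact eq_bot_of_le_itComm (Nat.sub_pos_of_lt hkc) hA h3

/-- Let `P` be a group and `K` a subgroup of `P`.  For a subgroup `X` of `P` define inductively
`γ_K^0(X) = X` and `γ_K^{i+1}(X) = ⁅γ_K^i(X), K⁆`.  Let `E` be a subgroup of `P`, let `k, c` be
integers with `1 ≤ k < c`, and let `A` be a subgroup of `P` such that `γ_K^k(E) ≤ A`,
`A ≤ γ_K^c(E)`, and `γ_K^c(A)` is trivial.  Then `A` is trivial. -/
theorem nilpotent_sandwich_trivial {P : Type*} [Group P] (K E A : Subgroup P) (k c : ℕ)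
    (hk : 1 ≤ k) (hkc : k < c)
    (h1 : itComm E K k ≤ A) (h2 : A ≤ itComm E K c) (h3 : itComm A K c = ⊥) :
    A = ⊥ :=
  nilpotent_sandwich_trivial_general K E A k c hkc h1 h2 h3
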